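/- Let t be a rooted plane tree with n = 2|t|−2 ≥ 1 and contour process C = C_t. Then for all integers 0 ≤ i ≤ j ≤ n, dist_t(θ_t(i), θ_t(j)) = C(i/n) + C(j/n) − 2·inf{ C(u) : i/n ≤ u ≤ j/n }. -/

import Mathlib

open MeasureTheory Filter Topology
open scoped ENNReal NNReal Classical

noncomputable section

namespace TreeSym

/-- Ulam–Harris words over the positive integers. -/
abbrev Vertex : Type := List ℕ+

instance : MeasurableSpace Vertex := ⊤
instance : MeasurableSpace (Finset Vertex) := ⊤

/-- A finite set of Ulam–Harris words is (the vertex set of) a rooted plane tree if it contains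
the empty word, is prefix-closed, and is closed under decreasing the last letter. -/
def IsPlaneTreeSet (t : Finset Vertex) : Prop :=
  ([] : Vertex) ∈ t ∧
  (∀ v ∈ t, ∀ u : Vertex, u <+: v → u ∈ t) ∧
  (∀ v : Vertex, ∀ i j : ℕ+, v ++ [i] ∈ t → j ≤ i → v ++ [j] ∈ t)

/-- The number of children of `v` in the vertex set `t`. -/
def nChild (t : Finset Vertex) (v : Vertex) : ℕ :=
  (t.filter fun w => ∃ i : ℕ+, w = v ++ [i]).card

/-- Length of the longest common prefix of two words. -/
def lcpLen : Vertex → Vertex → ℕ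
  | a :: u, b :: v => if a = b then lcpLen u v + 1 else 0
  | _, _ => 0

/-- The graph distance between two vertices of a plane tree. -/
def treeDist (u v : Vertex) : ℕ := u.length + v.length - 2 * lcpLen u v

/-- History of the contour exploration of the plane tree with vertex set `t`
(most recently visited vertex first). -/
def contourHist (t : Finset Vertex) : ℕ → List Vertex
  | 0 => [([] : Vertex)]
  | n + 1 =>
    let h := contourHist t n
    let cur := h.headI
    if (∃ m : ℕ, cur ++ [m.succPNat] ∈ t ∧ cur ++ [m.succPNat] ∉ h) then
      (cur ++ [(sInf {m : ℕ | cur ++ [m.succPNat] ∈ t ∧ cur ++ [m.succPNat] ∉ h}).succPNat]) :: h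
    else
      cur.dropLast :: h

/-- The contour exploration `θ_t`. -/
def theta (t : Finset Vertex) (i : ℕ) : Vertex := (contourHist t i).headI

/-- Piecewise linear interpolation: `interpFun n f (i/n) = f i` for `0 ≤ i ≤ n`, linear in
between. -/
def interpFun (n : ℕ) (f : ℕ → ℝ) (s : ℝ) : ℝ :=
  f 0 + ∑ k ∈ Finset.range n, (f (k + 1) - f k) * max 0 (min 1 (s * n - k))

lemma continuous_interpFun (n : ℕ) (f : ℕ → ℝ) : Continuous (interpFun n f) := by
  unfold interpFun
  refine continuous_const.add (continuous_finset_sum _ fun k _ => continuous_const.mul ?_)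
  exact continuous_const.max (continuous_const.min
    ((continuous_id.mul continuous_const).sub continuous_const))

/-- Piecewise linear interpolation, as a continuous map on `[0,1]`. -/
def interpMap (n : ℕ) (f : ℕ → ℝ) : C(unitInterval, ℝ) :=
  ⟨fun s => interpFun n f s, (continuous_interpFun n f).comp continuous_subtype_val⟩

/-- A multitype labeled plane tree with type space `S`: a finite set of Ulam–Harris words,
together with a type and a displacement (the label increment along the edge to the parent)
attached to each word. -/
structure MTree (S : Type*) where
  verts : Finset Vertex
  type : Vertex → S
  disp : Vertex → ℝ

/-- The underlying vertex set is a plane tree. -/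
def MTree.IsPlaneTree {S : Type*} (T : MTree S) : Prop := IsPlaneTreeSet T.verts

instance {S : Type*} [MeasurableSpace S] : MeasurableSpace (MTree S) :=
  MeasurableSpace.comap (fun T => (T.verts, T.type, T.disp)) inferInstance

/-- The label of a vertex: the sum of the displacements along the path from the root. -/
def labelOf {S : Type*} (T : MTree S) (v : Vertex) : ℝ :=
  ∑ j ∈ Finset.range v.length, T.disp (v.take (j + 1))

/-- The contour process, as a function on `ℝ`. -/
def contourFun {S : Type*} (T : MTree S) (s : ℝ) : ℝ :=
  interpFun (2 * T.verts.card - 2) (fun i => ((theta T.verts i).length : ℝ)) s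

/-- The label process, as a function on `ℝ`. -/
def labelFun {S : Type*} (T : MTree S) (s : ℝ) : ℝ :=
  interpFun (2 * T.verts.card - 2) (fun i => labelOf T (theta T.verts i)) s

/-- The contour process `C` of a tree, as a continuous map on `[0,1]`. -/
def contourProcess {S : Type*} (T : MTree S) : C(unitInterval, ℝ) :=
  interpMap (2 * T.verts.card - 2) fun i => ((theta T.verts i).length : ℝ)

/-- The label process `Z` of a labeled tree, as a continuous map on `[0,1]`. -/
def labelProcess {S : Type*} (T : MTree S) : C(unitInterval, ℝ) :=
  interpMap (2 * T.verts.card - 2) fun i => labelOf T (theta T.verts i)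

/-- The process `Λ^{(q)}` counting visited vertices of type `q` along the contour. -/
def lambdaProcess {S : Type*} (q : S) (T : MTree S) : C(unitInterval, ℝ) :=
  interpMap (2 * T.verts.card - 2) fun i =>
    (((Finset.range i).filter fun j => T.type (theta T.verts j) = q).card : ℝ)

/-! ### Symmetrization -/

/-- A vector of permutations, one for each potential vertex. -/
abbrev PermVec : Type := Vertex → Equiv.Perm ℕ+

/-- Relabel a word according to a permutation vector, the permutation used at each level being
the one attached to the (original) prefix. -/
def permWordAux (σ : PermVec) : Vertex → Vertex → Vertex
  | _, [] => []
  | p, i :: rest => σ p i :: permWordAux σ (p ++ [i]) rest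

def permWord (σ : PermVec) (v : Vertex) : Vertex := permWordAux σ [] v

/-- The inverse relabeling. -/
def invWordAux (σ : PermVec) : Vertex → Vertex → Vertex
  | _, [] => []
  | p, j :: rest => (σ p)⁻¹ j :: invWordAux σ (p ++ [(σ p)⁻¹ j]) rest

def invWord (σ : PermVec) (w : Vertex) : Vertex := invWordAux σ [] w

/-- Apply a permutation vector to a labeled multitype tree: children are reordered at every
vertex, types and displacements following their vertices and edges. -/
def permApply {S : Type*} (σ : PermVec) (T : MTree S) : MTree S :=
  ⟨T.verts.image (permWord σ), fun w => T.type (invWord σ w), fun w => T.disp (invWord σ w)⟩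

/-- The set `P_t` of admissible permutation vectors for `T`: at a vertex with `k` children the
permutation fixes everything above `k` and permutes `{1,…,k}`; away from the tree it is the
identity. -/
def PermSet {S : Type*} (T : MTree S) : Set PermVec :=
  {σ | (∀ v ∈ T.verts,
          (∀ i : ℕ+, (i : ℕ) ≤ nChild T.verts v → ((σ v i : ℕ) ≤ nChild T.verts v)) ∧
          (∀ i : ℕ+, nChild T.verts v < (i : ℕ) → σ v i = i)) ∧
        ∀ v ∉ T.verts, σ v = 1}

/-- The law of the symmetrization of the (deterministic) tree `T`: the uniform average of the
point masses at `σ(T)`, `σ ∈ P_T`. -/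
def symKernel {S : Type*} [MeasurableSpace S] (T : MTree S) : Measure (MTree S) :=
  ((PermSet T).ncard : ℝ≥0∞)⁻¹ •
    Measure.sum (fun σ : ↥(PermSet T) => Measure.dirac (permApply (σ : PermVec) T))

/-- The symmetrization `ν^sym` of a law `ν` on labeled multitype plane trees. -/
def symLaw {S : Type*} [MeasurableSpace S] (ν : Measure (MTree S)) : Measure (MTree S) :=
  ν.bind symKernel

/-- A law is symmetric if it is equal to its symmetrization. -/
def IsSymmetricLaw {S : Type*} [MeasurableSpace S] (ν : Measure (MTree S)) : Prop :=
  symLaw ν = ν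

/-! ### Valid laws -/

/-- Forget the displacements of a labeled tree. -/
def shape {S : Type*} (T : MTree S) : MTree S := ⟨T.verts, T.type, fun _ => 0⟩

/-- The vector of displacements from `v` to its (first `k`) children. -/
def dispVecAt {S : Type*} (T : MTree S) (v : Vertex) (k : ℕ) : Fin k → ℝ :=
  fun i => T.disp (v ++ [(i : ℕ).succPNat])

/-- The child type vector of `v` (with `k` children). -/
def ctypeAt {S : Type*} (T : MTree S) (v : Vertex) (k : ℕ) : Fin k → S :=
  fun i => T.type (v ++ [(i : ℕ).succPNat])

/-- A family of displacement distributions: for each parent type and each child type vector of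
each length `k`, a measure on `ℝ^k`. -/
abbrev DispFamily (S : Type*) : Type _ :=
  S → (k : ℕ) → (Fin k → S) → Measure (Fin k → ℝ)

/-- `ν` has displacement family `π`: conditionally on the underlying typed tree, the displacement
vectors at the vertices are independent, with laws given by `π` evaluated at the type of a vertex
and its child type vector. -/
def HasDispFamily {S : Type*} [MeasurableSpace S] (ν : Measure (MTree S))
    (π : DispFamily S) : Prop :=
  (∀ r k s, IsProbabilityMeasure (π r k s)) ∧
  ∀ t : MTree S, ∀ B : (v : Vertex) → Set (Fin (nChild t.verts v) → ℝ),
    (∀ v, MeasurableSet (B v)) →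
    ν {T | shape T = shape t ∧ ∀ v ∈ t.verts, dispVecAt T v (nChild t.verts v) ∈ B v}
      = ν {T | shape T = shape t}
        * ∏ v ∈ t.verts, π (t.type v) (nChild t.verts v) (ctypeAt t v (nChild t.verts v)) (B v)

/-- A law on labeled multitype plane trees is valid if it is carried by plane trees, the law of
the underlying typed plane tree is symmetric, and the displacements admit a displacement family
as above. -/
def IsValidLaw {S : Type*} [MeasurableSpace S] (ν : Measure (MTree S)) : Prop :=
  ν {T | ¬ T.IsPlaneTree} = 0 ∧ IsSymmetricLaw (ν.map shape) ∧ ∃ π : DispFamily S, HasDispFamily ν π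

/-! ### Convergence in distribution -/

/-- Convergence in distribution of a sequence of random elements (defined on possibly different
probability spaces) towards a limiting random element: the expectations of every bounded
continuous functional converge. -/
def TendstoInDist {Ω : ℕ → Type*} [∀ n, MeasurableSpace (Ω n)]
    (P : ∀ n, Measure (Ω n)) {E : Type*} [TopologicalSpace E] (X : ∀ n, Ω n → E)
    {Ω₀ : Type*} [MeasurableSpace Ω₀] (P₀ : Measure Ω₀) (Y : Ω₀ → E) : Prop :=
  ∀ f : BoundedContinuousFunction E ℝ,
    Tendsto (fun n => ∫ ω, f (X n ω) ∂(P n)) atTop (𝓝 (∫ ω, f (Y ω) ∂P₀))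

/-- Tightness of a family of laws of random elements of a topological space. -/
def TightSeq {E : Type*} [TopologicalSpace E] {Ω : ℕ → Type*} [∀ n, MeasurableSpace (Ω n)]
    (P : ∀ n, Measure (Ω n)) (X : ∀ n, Ω n → E) : Prop :=
  ∀ ε : ℝ≥0∞, 0 < ε → ∃ K : Set E, IsCompact K ∧ ∀ n, P n {ω | X n ω ∉ K} ≤ ε

/-! ### Galton–Watson laws -/

instance {S : Type*} [MeasurableSpace S] : MeasurableSpace (List S) := ⊤

/-- The child type vector of `v`, as a list. -/
def ctypeList {S : Type*} (T : MTree S) (v : Vertex) : List S :=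
  (List.range (nChild T.verts v)).map fun m => T.type (v ++ [m.succPNat])

/-- `ν` is the law of a multitype Galton–Watson tree with offspring distributions `p`:
the `p s` are permutation-invariant probability measures on finite type sequences, and the
probability that the typed tree equals a given finite plane tree `t` is the product over the
vertices of `t` of the offspring probabilities of the child type vectors (times the probability
of the root type). -/
def IsGWLaw {S : Type*} [MeasurableSpace S] (ν : Measure (MTree S))
    (p : S → Measure (List S)) : Prop :=
  (∀ s, IsProbabilityMeasure (p s)) ∧
  (∀ s : S, ∀ l l' : List S, l.Perm l' → p s {l} = p s {l'}) ∧
  ∀ t : MTree S, t.IsPlaneTree →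
    ν {T | T.verts = t.verts ∧ ∀ v ∈ t.verts, T.type v = t.type v}
      = ν {T | T.type [] = t.type []} * ∏ v ∈ t.verts, p (t.type v) {ctypeList t v}

/-- A tree is normalized if its type and displacement functions take default values off the
vertex set, and (for unlabeled trees) all displacements vanish. -/
def Normalized {S : Type*} (s₀ : S) (T : MTree S) : Prop :=
  (∀ v ∉ T.verts, T.type v = s₀) ∧ T.disp = fun _ => 0

/-! ### Displacement families: symmetrization and centering -/

/-- The symmetrized displacement family `π^{sym}` defined by
`π^{u,sym}_s(B) = (1/k!) ∑_{σ ∈ 𝔖_k} π^u_{σ(s)}(σ(B))`. -/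
def symFamily {S : Type*} (π : DispFamily S) : DispFamily S := fun r k s =>
  ((Nat.factorial k : ℝ≥0∞))⁻¹ •
    ∑ σ : Equiv.Perm (Fin k),
      (π r k fun j => s (σ.symm j)).map fun x : Fin k → ℝ => fun j => x (σ j)

/-- A displacement family is locally centered if every coordinate of every displacement
distribution has mean zero. -/
def LocallyCentered {S : Type*} (π : DispFamily S) : Prop :=
  ∀ (r : S) (k : ℕ) (s : Fin k → S) (i : Fin k), (∫ x, x i ∂(π r k s)) = 0

/-- A displacement family is centered if, for every `k`, every parent type `r` and every vector
`z` of type counts summing to `k`, the sum over all ordered child type sequences with counts `z`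
of the total mean displacement is zero. -/
def Centered {S : Type*} (π : DispFamily S) : Prop :=
  ∀ (k : ℕ) (r : S) (z : S →₀ ℕ), (z.sum fun _ n => n) = k →
    (∑ᶠ s ∈ {s : Fin k → S | ∀ x : S,
        ((Finset.univ.filter fun i => s i = x).card = z x)},
      ∑ i : Fin k, ∫ x, x i ∂(π r k s)) = 0

/-! ### Subtrees spanned by finitely many vertices -/

/-- The vertex set of the subtree spanned by the vertices `r i` and their ancestors. -/
def spanVerts {k : ℕ} (r : Fin k → Vertex) : Finset Vertex :=
  insert ([] : Vertex) (Finset.univ.biUnion fun i => ((r i).inits).toFinset)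

/-- The rank of the child index `i` of `p` among the child indices present in `s`. -/
def childRank (s : Finset Vertex) (p : Vertex) (i : ℕ+) : ℕ+ :=
  ((s.filter fun w => ∃ j : ℕ+, j ≤ i ∧ w = p ++ [j]).card).toPNat'

def reindexAux (s : Finset Vertex) : Vertex → Vertex → Vertex
  | _, [] => []
  | p, i :: rest => childRank s p i :: reindexAux s (p ++ [i]) rest

/-- The Ulam–Harris label, in the plane tree with vertex set `s`, of the node corresponding to
the vertex `v ∈ s`: children are relabeled consecutively, preserving their order. -/
def reindex (s : Finset Vertex) (v : Vertex) : Vertex := reindexAux s [] v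

/-- The set of child indices of `p` present in `s`. -/
def childIdxs (s : Finset Vertex) (p : Vertex) : Finset ℕ+ :=
  (s.filter fun w => ∃ i : ℕ+, w = p ++ [i]).image fun w => w.getLastD 1

/-- The `m`-th smallest child index of `p` present in `s`. -/
def nthChildIndex (s : Finset Vertex) (p : Vertex) (m : ℕ+) : ℕ+ :=
  ((childIdxs s p).sort (· ≤ ·)).getD ((m : ℕ) - 1) 1

def unIndexAux (s : Finset Vertex) : Vertex → Vertex → Vertex
  | _, [] => []
  | p, m :: rest =>
      nthChildIndex s p m :: unIndexAux s (p ++ [nthChildIndex s p m]) rest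

/-- The inverse of `reindex s`. -/
def unIndex (s : Finset Vertex) (w : Vertex) : Vertex := unIndexAux s [] w

/-- The labeled subtree of `T` with vertex set `s ⊆ T.verts`, viewed as a plane tree (with the
plane structure, the types and the displacements inherited from `T`). -/
def spanTree {S : Type*} (T : MTree S) (s : Finset Vertex) : MTree S :=
  ⟨s.image (reindex s), fun w => T.type (unIndex s w), fun w => T.disp (unIndex s w)⟩

/-- The labeled subtree of `T` with vertex set `s`, with the displacements on child edges of
branchpoints replaced by `0` (the modified labeling `d⟨·⟩`). -/
def spanTreeMod {S : Type*} (T : MTree S) (s : Finset Vertex) : MTree S :=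
  ⟨(spanTree T s).verts, (spanTree T s).type,
    fun w => if nChild (spanTree T s).verts w.dropLast = 1 then (spanTree T s).disp w else 0⟩

/-- `R` is a uniform sample of `k` vertices from the random labeled tree `X`: conditionally on
`X`, the coordinates of `R` are independent and uniformly distributed on the vertex set of `X`. -/
def UniformSample {Ω : Type*} [MeasurableSpace Ω] (P : Measure Ω) {S : Type*} [MeasurableSpace S]
    (X : Ω → MTree S) {k : ℕ} (R : Ω → Fin k → Vertex) : Prop :=
  ∀ A : Set (MTree S), MeasurableSet A → ∀ r : Fin k → Vertex,
    P {ω | X ω ∈ A ∧ R ω = r}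
      = ∫⁻ ω in {ω | X ω ∈ A},
          (if ∀ i, r i ∈ (X ω).verts then (((X ω).verts.card : ℝ≥0∞) ^ k)⁻¹ else 0) ∂P

/-! ### Lexicographic enumeration, height process -/

/-- The vertices of `t` in lexicographic order. -/
def lexEnum (t : Finset Vertex) : List Vertex := t.sort (· ≤ ·)

/-- The `i`-th vertex in lexicographic order (`v_{|t|} = v_0` by convention, since `v_0` is the
root `[]`, which is also the default value). -/
def lexVertex (t : Finset Vertex) (i : ℕ) : Vertex := (lexEnum t).getD i []

/-- The height process `H_t`, as a function on `ℝ`. -/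
def heightFun {S : Type*} (T : MTree S) (s : ℝ) : ℝ :=
  interpFun T.verts.card (fun i => ((lexVertex T.verts i).length : ℝ)) s

/-- The lexicographic label process `S_t`, as a function on `ℝ`. -/
def lexLabelFun {S : Type*} (T : MTree S) (s : ℝ) : ℝ :=
  interpFun T.verts.card (fun i => labelOf T (lexVertex T.verts i)) s

/-- The height process `H_t`, as a continuous map on `[0,1]`. -/
def heightProcess {S : Type*} (T : MTree S) : C(unitInterval, ℝ) :=
  interpMap T.verts.card fun i => ((lexVertex T.verts i).length : ℝ)

/-- The lexicographic label process `S_t`, as a continuous map on `[0,1]`. -/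
def lexLabelProcess {S : Type*} (T : MTree S) : C(unitInterval, ℝ) :=
  interpMap T.verts.card fun i => labelOf T (lexVertex T.verts i)

/-- `j_t(i) = 2i - h(v_i)` for `i < |t|`, and `j_t(i) = 2|t| - 2` otherwise. -/
def jIdx (t : Finset Vertex) (i : ℕ) : ℕ :=
  if i < t.card then 2 * i - (lexVertex t i).length else 2 * t.card - 2

/-- `φ_t(s) = |t|⁻¹ · sup {i ≤ |t| : j_t(i) ≤ s(2|t|-2)}`. -/
def phi (t : Finset Vertex) (s : ℝ) : ℝ :=
  ((sSup {i : ℕ | i ≤ t.card ∧ (jIdx t i : ℝ) ≤ s * (2 * t.card - 2)} : ℕ) : ℝ) / t.card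

/-- The increasing reordering of the finite vector `f`. -/
def sortFun {k : ℕ} (f : Fin k → ℝ) (i : ℕ) : ℝ :=
  ((List.ofFn f).insertionSort (· ≤ ·)).getD i 0

instance : MeasurableSpace C(unitInterval, ℝ) := borel _

/-! Each step of the contour exploration goes either to a child not visited before or to the
parent. Hence, for `j ≥ i`, the longest common prefix of `θ(i)` and `θ(j)` is the running minimum
of the heights `|θ(m)|`, `i ≤ m ≤ j`; and the infimum of a piecewise linear interpolation over an
interval with grid endpoints is the minimum of its grid values there. -/

section LongestCommonPrefix

lemma lcpLen_nil_right (u : Vertex) : lcpLen u [] = 0 := by cases u <;> rfl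

lemma lcpLen_self (u : Vertex) : lcpLen u u = u.length := by
  induction u with
  | nil => rfl
  | cons a u ih => simp [lcpLen, ih]

lemma lcpLen_le_length_left (u v : Vertex) : lcpLen u v ≤ u.length := by
  induction u generalizing v with
  | nil => rfl
  | cons a u ih =>
    cases v with
    | nil => simp [lcpLen]
    | cons b v => unfold lcpLen; split_ifs <;> simp [ih v]

lemma lcpLen_le_length_right (u v : Vertex) : lcpLen u v ≤ v.length := by
  induction v generalizing u with
  | nil => simp [lcpLen_nil_right]
  | cons b v ih =>
    cases u with
    | nil => simp [lcpLen]
    | cons a u => unfold lcpLen; split_ifs <;> simp [ih u]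

lemma lcpLen_append_singleton {u v : Vertex} {c : ℕ+} (h : ¬ v ++ [c] <+: u) :
    lcpLen u (v ++ [c]) = lcpLen u v := by
  induction v generalizing u with
  | nil =>
    cases u with
    | nil => rfl
    | cons a u =>
      have hac : a ≠ c := by rintro rfl; simp at h
      simp [lcpLen, hac]
  | cons b v ih =>
    cases u with
    | nil => rfl
    | cons a u =>
      by_cases hab : a = b
      · subst hab
        simp only [List.cons_append, List.cons_prefix_cons, true_and] at h
        simp [lcpLen, ih h]
      · simp [lcpLen, hab]

lemma lcpLen_dropLast (u v : Vertex) :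
    lcpLen u v.dropLast = min (lcpLen u v) (v.length - 1) := by
  induction v generalizing u with
  | nil => simp [lcpLen_nil_right]
  | cons b v ih =>
    cases v with
    | nil => simp [lcpLen_nil_right]
    | cons b' v' =>
      cases u with
      | nil => simp [lcpLen]
      | cons a u =>
        by_cases hab : a = b
        · have hlen := lcpLen_le_length_right u (b' :: v')
          simp only [List.dropLast_cons_cons, lcpLen, if_pos hab, ih u, List.length_cons] at hlen ⊢
          omega
        · simp [lcpLen, hab]

lemma cast_treeDist (u v : Vertex) :
    (treeDist u v : ℝ) = u.length + v.length - 2 * lcpLen u v := by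
  have := lcpLen_le_length_left u v
  have := lcpLen_le_length_right u v
  rw [treeDist, Nat.cast_sub (by omega)]
  push_cast
  ring

end LongestCommonPrefix

section Contour

variable (t : Finset Vertex)

lemma contourHist_succ (k : ℕ) : contourHist t (k + 1) = theta t (k + 1) :: contourHist t k := by
  rw [theta, contourHist]
  split_ifs <;> rfl

lemma mem_contourHist {k : ℕ} {x : Vertex} : x ∈ contourHist t k ↔ ∃ m ≤ k, theta t m = x := by
  induction k with
  | zero => simp [contourHist, theta, eq_comm]
  | succ k ih =>
    rw [contourHist_succ, List.mem_cons, ih]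
    constructor
    · rintro (rfl | ⟨m, hm, rfl⟩)
      exacts [⟨k + 1, le_rfl, rfl⟩, ⟨m, by omega, rfl⟩]
    · rintro ⟨m, hm, rfl⟩
      rcases Nat.of_le_succ hm with hm | rfl
      exacts [Or.inr ⟨m, hm, rfl⟩, Or.inl rfl]

lemma theta_succ_eq_child_or_parent (k : ℕ) :
    (∃ c : ℕ+, theta t (k + 1) = theta t k ++ [c] ∧ ∀ m ≤ k, theta t m ≠ theta t (k + 1)) ∨
      theta t (k + 1) = (theta t k).dropLast := by
  set fresh := {m : ℕ | theta t k ++ [m.succPNat] ∈ t ∧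
    theta t k ++ [m.succPNat] ∉ contourHist t k}
  by_cases hne : fresh.Nonempty
  · have hstep : theta t (k + 1) = theta t k ++ [(sInf fresh).succPNat] :=
      congrArg List.headI (if_pos hne)
    refine Or.inl ⟨_, hstep, fun m hm heq => (Nat.sInf_mem hne).2 ?_⟩
    exact (mem_contourHist t).2 ⟨m, hm, heq.trans hstep⟩
  · exact Or.inr (congrArg List.headI (if_neg hne))

lemma exists_theta_eq_of_prefix {k : ℕ} {u : Vertex} (hu : u <+: theta t k) :
    ∃ m ≤ k, theta t m = u := by
  induction k generalizing u with
  | zero => exact ⟨0, le_rfl, (List.prefix_nil.1 hu).symm⟩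
  | succ k ih =>
    rcases theta_succ_eq_child_or_parent t k with ⟨c, hc, -⟩ | hc <;> rw [hc] at hu
    · rcases List.prefix_concat_iff.1 hu with rfl | hu
      · exact ⟨k + 1, le_rfl, hc⟩
      · obtain ⟨m, hm, h⟩ := ih hu
        exact ⟨m, by omega, h⟩
    · obtain ⟨m, hm, h⟩ := ih (hu.trans (List.dropLast_prefix _))
      exact ⟨m, by omega, h⟩

/-- A child first entered after time `i` cannot be an ancestor of `θ(i)`, so stepping down to it
does not lengthen the common prefix with `θ(i)`. -/
lemma lcpLen_theta_succ {i j : ℕ} (hij : i ≤ j) :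
    lcpLen (theta t i) (theta t (j + 1))
      = min (lcpLen (theta t i) (theta t j)) (theta t (j + 1)).length := by
  rcases theta_succ_eq_child_or_parent t j with ⟨c, hc, hfresh⟩ | hc
  · have hnotPrefix : ¬ theta t j ++ [c] <+: theta t i := fun hp => by
      obtain ⟨m, hm, hθm⟩ := exists_theta_eq_of_prefix t hp
      exact hfresh m (hm.trans hij) (hθm.trans hc.symm)
    have := lcpLen_le_length_right (theta t i) (theta t j)
    rw [hc, lcpLen_append_singleton hnotPrefix, List.length_append, List.length_singleton]
    omega
  · rw [hc, lcpLen_dropLast, List.length_dropLast]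

lemma lcpLen_theta_eq_inf' {i j : ℕ} (hij : i ≤ j) :
    lcpLen (theta t i) (theta t j)
      = (Finset.Icc i j).inf' (Finset.nonempty_Icc.2 hij) fun m => (theta t m).length := by
  induction j, hij using Nat.le_induction with
  | base => simp [lcpLen_self]
  | succ j hij ih =>
    rw [Finset.inf'_congr _ (Finset.insert_Icc_right_eq_Icc_add_one (hij.trans j.le_succ)).symm
      fun _ _ => rfl]
    simp only [Finset.inf'_insert (H := Finset.nonempty_Icc.2 hij), lcpLen_theta_succ t hij, ih,
      min_comm]

end Contour

section Interpolation

variable {n : ℕ} (f : ℕ → ℝ)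

lemma interpFun_eq_of_mem_segment {k : ℕ} (hk : k < n) {s : ℝ}
    (h₁ : (k : ℝ) ≤ s * n) (h₂ : s * n ≤ k + 1) :
    interpFun n f s = f k + (f (k + 1) - f k) * (s * n - k) := by
  have hsub : Finset.range (k + 1) ⊆ Finset.range n := Finset.range_subset_range.2 hk
  have hafter : ∀ x ∈ Finset.range n, x ∉ Finset.range (k + 1) →
      (f (x + 1) - f x) * max 0 (min 1 (s * n - x)) = 0 := by
    intro x _ hx
    have : k + 1 ≤ x := by simpa using hx
    have : (k : ℝ) + 1 ≤ x := by exact_mod_cast this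
    rw [max_eq_left (by linarith [min_le_right 1 (s * n - x)]), mul_zero]
  have hbefore : ∀ x ∈ Finset.range k,
      (f (x + 1) - f x) * max 0 (min 1 (s * n - x)) = f (x + 1) - f x := by
    intro x hx
    have : (x : ℝ) + 1 ≤ k := by exact_mod_cast Finset.mem_range.1 hx
    rw [min_eq_left (by linarith), max_eq_right zero_le_one, mul_one]
  rw [interpFun, ← Finset.sum_subset hsub hafter, Finset.sum_range_succ,
    Finset.sum_congr rfl hbefore, Finset.sum_range_sub, min_eq_right (by linarith),
    max_eq_right (by linarith)]
  ring

lemma interpFun_natCast_div (hn : 0 < n) {i : ℕ} (hi : i ≤ n) :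
    interpFun n f ((i : ℝ) / n) = f i := by
  have hs : (i : ℝ) / n * n = i := div_mul_cancel₀ _ (by positivity)
  cases i with
  | zero => simp [interpFun_eq_of_mem_segment f hn (k := 0) (s := 0) (by simp) (by simp)]
  | succ m =>
    rw [interpFun_eq_of_mem_segment f (k := m) (by omega) (by rw [hs]; push_cast; linarith)
      (by rw [hs]; push_cast; linarith), hs]
    push_cast
    ring

/-- Between consecutive grid points the interpolation is a convex combination of two grid
values. -/
lemma inf'_le_interpFun (hn : 0 < n) {i j : ℕ} (hij : i ≤ j) (hjn : j ≤ n) {s : ℝ}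
    (hs : s ∈ Set.Icc ((i : ℝ) / n) ((j : ℝ) / n)) :
    (Finset.Icc i j).inf' (Finset.nonempty_Icc.2 hij) f ≤ interpFun n f s := by
  have hnR : (0 : ℝ) < n := by exact_mod_cast hn
  have hi : (i : ℝ) ≤ s * n := (div_le_iff₀ hnR).1 hs.1
  have hj : s * n ≤ j := (le_div_iff₀ hnR).1 hs.2
  have hinf {m : ℕ} (h₁ : i ≤ m) (h₂ : m ≤ j) := Finset.inf'_le f (Finset.mem_Icc.2 ⟨h₁, h₂⟩)
  set k := ⌊s * n⌋₊
  have hk : (k : ℝ) ≤ s * n := Nat.floor_le ((Nat.cast_nonneg i).trans hi)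
  have hk' : s * n < k + 1 := Nat.lt_floor_add_one _
  have hik : i ≤ k := Nat.le_floor hi
  have hkj : k ≤ j := Nat.floor_le_of_le hj
  rcases hkj.lt_or_eq with hkj | rfl
  · rw [interpFun_eq_of_mem_segment f (hkj.trans_le hjn) hk hk'.le]
    have h₁ := hinf hik hkj.le
    have h₂ := hinf (hik.trans k.le_succ) hkj
    nlinarith
  · have : s = (k : ℝ) / n := by rw [eq_div_iff hnR.ne']; linarith
    rw [this, interpFun_natCast_div f hn hjn]
    exact hinf hij le_rfl

lemma sInf_image_interpFun_Icc (hn : 0 < n) {i j : ℕ} (hij : i ≤ j) (hjn : j ≤ n) :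
    sInf (interpFun n f '' Set.Icc ((i : ℝ) / n) ((j : ℝ) / n))
      = (Finset.Icc i j).inf' (Finset.nonempty_Icc.2 hij) f := by
  refine IsLeast.csInf_eq ⟨?_, ?_⟩
  · obtain ⟨m, hm, hfm⟩ := Finset.exists_mem_eq_inf' (Finset.nonempty_Icc.2 hij) f
    obtain ⟨him, hmj⟩ := Finset.mem_Icc.1 hm
    refine ⟨(m : ℝ) / n, ⟨?_, ?_⟩, by rw [interpFun_natCast_div f hn (hmj.trans hjn), hfm]⟩ <;>
      gcongr
  · rintro _ ⟨s, hs, rfl⟩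
    exact inf'_le_interpFun f hn hij hjn hs

end Interpolation

theorem statement16_general (t : Finset Vertex)
    (hn : 1 ≤ 2 * t.card - 2) :
    ∀ i j : ℕ, i ≤ j → j ≤ 2 * t.card - 2 →
      (treeDist (theta t i) (theta t j) : ℝ)
        = interpFun (2 * t.card - 2) (fun m => ((theta t m).length : ℝ))
            ((i : ℝ) / ((2 * t.card - 2 : ℕ) : ℝ))
          + interpFun (2 * t.card - 2) (fun m => ((theta t m).length : ℝ))
            ((j : ℝ) / ((2 * t.card - 2 : ℕ) : ℝ))
          - 2 * sInf ((interpFun (2 * t.card - 2) fun m => ((theta t m).length : ℝ)) ''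
              Set.Icc ((i : ℝ) / ((2 * t.card - 2 : ℕ) : ℝ))
                ((j : ℝ) / ((2 * t.card - 2 : ℕ) : ℝ))) := by
  intro i j hij hjn
  rw [sInf_image_interpFun_Icc _ hn hij hjn, interpFun_natCast_div _ hn (hij.trans hjn),
    interpFun_natCast_div _ hn hjn, cast_treeDist, lcpLen_theta_eq_inf' t hij, Nat.cast_finsetInf']

/-- Section 2.2. For a rooted plane tree `t` with `n = 2|t|-2 ≥ 1` and contour
process `C = C_t`, for all `0 ≤ i ≤ j ≤ n`:
`dist_t(θ_t(i), θ_t(j)) = C(i/n) + C(j/n) - 2·inf{C(u) : i/n ≤ u ≤ j/n}`. -/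
theorem statement16 (t : Finset Vertex) (ht : IsPlaneTreeSet t)
    (hn : 1 ≤ 2 * t.card - 2) :
    ∀ i j : ℕ, i ≤ j → j ≤ 2 * t.card - 2 →
      (treeDist (theta t i) (theta t j) : ℝ)
        = interpFun (2 * t.card - 2) (fun m => ((theta t m).length : ℝ))
            ((i : ℝ) / ((2 * t.card - 2 : ℕ) : ℝ))
          + interpFun (2 * t.card - 2) (fun m => ((theta t m).length : ℝ))
            ((j : ℝ) / ((2 * t.card - 2 : ℕ) : ℝ))
          - 2 * sInf ((interpFun (2 * t.card - 2) fun m => ((theta t m).length : ℝ)) ''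
              Set.Icc ((i : ℝ) / ((2 * t.card - 2 : ℕ) : ℝ))
                ((j : ℝ) / ((2 * t.card - 2 : ℕ) : ℝ))) :=
  statement16_general t hn

end TreeSym
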